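/- For every m ≥ 1 and t ∈ (0,1), the derivative of η_m satisfies t · η_m'(t) = (1/2) ζ_m(t) + (1/2) η_m(t)^2, where η_m(t) = ∑_{i=1}^m X_1(t)⋯X_i(t) and ζ_m(t) = ∑_{i=1}^m X_1(t)^2⋯X_i(t)^2. -/

import Mathlib

/-- Iterated logarithmic functions: `X 1 t = (1 - log t)⁻¹`, `X i = X 1 ∘ X (i-1)`. -/
noncomputable def X : ℕ → ℝ → ℝ
  | 0, t => t
  | n + 1, t => (1 - Real.log (X n t))⁻¹

noncomputable def eta (m : ℕ) (t : ℝ) : ℝ :=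
  ∑ i ∈ Finset.Icc 1 m, ∏ j ∈ Finset.Icc 1 i, X j t

noncomputable def zeta (m : ℕ) (t : ℝ) : ℝ :=
  ∑ i ∈ Finset.Icc 1 m, ∏ j ∈ Finset.Icc 1 i, (X j t) ^ 2

/-!
Each `X (i+1) = (1 - log (X i))⁻¹` satisfies `t (X (i+1))' = X (i+1)² · t (X i)' / X i`, so by
induction `t (X i)' = X i · P i` with `P i = X 1 ⋯ X i`, and then the product rule gives
`t (P i)' = P i · eta i`. Summing, `t (eta m)' = ∑ P i · (P 1 + ⋯ + P i)`, which is half of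
`∑ (P i)² + (∑ P i)² = zeta m + (eta m)²`.
-/

open Finset

theorem two_mul_sum_mul_partialSum_eq {M : Type*} [CommRing M] (a : ℕ → M) (m : ℕ) :
    2 * ∑ i ∈ Icc 1 m, a i * ∑ j ∈ Icc 1 i, a j = ∑ i ∈ Icc 1 m, a i ^ 2 + (∑ i ∈ Icc 1 m, a i) ^ 2 := by
  induction m with
  | zero => simp
  | succ n ih =>
    simp only [sum_Icc_succ_top (Nat.le_add_left 1 n)]
    linear_combination ih

noncomputable def prodX (i : ℕ) (t : ℝ) : ℝ := ∏ j ∈ Icc 1 i, X j t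

theorem prodX_succ (i : ℕ) (t : ℝ) : prodX (i + 1) t = prodX i t * X (i + 1) t :=
  prod_Icc_succ_top (Nat.le_add_left 1 i) _

theorem eta_eq_sum_prodX (m : ℕ) (t : ℝ) : eta m t = ∑ i ∈ Icc 1 m, prodX i t := rfl

theorem eta_succ (n : ℕ) (t : ℝ) : eta (n + 1) t = eta n t + prodX (n + 1) t :=
  sum_Icc_succ_top (Nat.le_add_left 1 n) _

theorem zeta_eq_sum_prodX_sq (m : ℕ) (t : ℝ) : zeta m t = ∑ i ∈ Icc 1 m, prodX i t ^ 2 := by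
  simp only [zeta, prodX, prod_pow]

theorem X_mem_Ioo (i : ℕ) {t : ℝ} (ht : t ∈ Set.Ioo (0 : ℝ) 1) : X i t ∈ Set.Ioo (0 : ℝ) 1 := by
  induction i with
  | zero => exact ht
  | succ n ih =>
    have hlog : Real.log (X n t) < 0 := Real.log_neg ih.1 ih.2
    exact ⟨inv_pos.2 (by linarith), inv_lt_one_of_one_lt₀ (by linarith)⟩

theorem hasDerivAt_X (i : ℕ) {t : ℝ} (ht : t ∈ Set.Ioo (0 : ℝ) 1) :
    HasDerivAt (X i) (X i t * prodX i t / t) t := by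
  induction i with
  | zero =>
    refine (hasDerivAt_id t).congr_deriv ?_
    simp [X, prodX, ht.1.ne']
  | succ n ih =>
    have hXn := X_mem_Ioo n ht
    have hden : 1 - Real.log (X n t) ≠ 0 := by
      linarith [Real.log_neg hXn.1 hXn.2]
    have h : HasDerivAt (X (n + 1)) _ t :=
      (((Real.hasDerivAt_log hXn.1.ne').comp t ih).const_sub 1).inv hden
    refine h.congr_deriv ?_
    rw [prodX_succ, show X (n + 1) t = (1 - Real.log (X n t))⁻¹ from rfl, Function.comp_apply]
    field_simp [hXn.1.ne']

theorem hasDerivAt_prodX (i : ℕ) {t : ℝ} (ht : t ∈ Set.Ioo (0 : ℝ) 1) :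
    HasDerivAt (prodX i) (prodX i t * eta i t / t) t := by
  induction i with
  | zero =>
    have h : HasDerivAt (prodX 0) 0 t := hasDerivAt_const t (1 : ℝ)
    simpa [eta] using h
  | succ n ih =>
    have h : HasDerivAt (prodX (n + 1)) _ t :=
      (ih.mul (hasDerivAt_X (n + 1) ht)).congr_of_eventuallyEq (.of_forall (prodX_succ n))
    refine h.congr_deriv ?_
    rw [eta_succ, prodX_succ]
    ring

theorem hasDerivAt_eta_general (m : ℕ) (t : ℝ) (ht : t ∈ Set.Ioo (0:ℝ) 1) :
    HasDerivAt (eta m) ((1 / 2 * zeta m t + 1 / 2 * (eta m t) ^ 2) / t) t := by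
  have h : HasDerivAt (eta m) _ t := HasDerivAt.fun_sum fun i (_ : i ∈ Icc 1 m) => hasDerivAt_prodX i ht
  refine h.congr_deriv ?_
  simp only [zeta_eq_sum_prodX_sq, eta_eq_sum_prodX, ← sum_div]
  linear_combination two_mul_sum_mul_partialSum_eq (fun i => prodX i t) m / (2 * t)

theorem hasDerivAt_eta (m : ℕ) (hm : 1 ≤ m) (t : ℝ) (ht : t ∈ Set.Ioo (0:ℝ) 1) :
    HasDerivAt (eta m) ((1 / 2 * zeta m t + 1 / 2 * (eta m t) ^ 2) / t) t :=
  hasDerivAt_eta_general m t ht
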